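/- arXiv:1109.0634 — 2 statements merged into one kernel-verified Lean document; each statement's English description precedes it below -/
import Mathlib

section
/- Let L be a set of m distinct straight lines in ℝ³ and let J₀ be a finite set of points each of which lies on at least two lines of L. Suppose that for some real C ≥ 1 the set J₀ is proper 3-dimensional up to the constant factor C, i.e., there is a set H of at most C·|J₀|^{1/3} planes such that no point of J₀ lies on any plane of H and any two distinct points of J₀ are strictly separated by some plane of H. Then |J₀| ≤ C^{3/2}·m^{3/2}. -/
open scoped BigOperators

/-- A straight line in `ℝ^d`, given as the set of points on an affine line. -/
def IsLine {d : ℕ} (l : Set (Fin d → ℝ)) : Prop :=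
  ∃ p v : Fin d → ℝ, v ≠ 0 ∧ l = {x | ∃ t : ℝ, x = p + t • v}

/-- The signed value of a point `x` with respect to the plane `{y | ∑ i, h.1 i * y i = h.2}`
in `ℝ³`, represented by its normal vector `h.1` and offset `h.2`. -/
def pval (h : (Fin 3 → ℝ) × ℝ) (x : Fin 3 → ℝ) : ℝ :=
  (∑ i, h.1 i * x i) - h.2

/-- A finite set `P ⊂ ℝ³` is proper 3-dimensional up to the constant factor `C ≥ 1` if
there is a set `H` of at most `C * |P|^(1/3)` planes such that no point of `P` lies on any
plane of `H` and any two distinct points of `P` are strictly separated by some plane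
of `H`. -/
def Proper3D (C : ℝ) (P : Set (Fin 3 → ℝ)) : Prop :=
  ∃ H : Finset ((Fin 3 → ℝ) × ℝ),
    (∀ h ∈ H, h.1 ≠ 0) ∧
    (H.card : ℝ) ≤ C * (P.ncard : ℝ) ^ ((1 : ℝ) / 3) ∧
    (∀ p ∈ P, ∀ h ∈ H, pval h p ≠ 0) ∧
    (∀ p ∈ P, ∀ q ∈ P, p ≠ q → ∃ h ∈ H, pval h p * pval h q < 0)


/-!
Restricted to a line `t ↦ p + t • v`, a plane becomes an affine function `a + t * b` of the
parameter, and the set of `t` with `(a + t * b) * b > 0` is an upper set. The number of planes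
of `H` whose upper set contains `t` therefore increases strictly between any two points of `J₀`
on the line (some plane separates them), so a line carries at most `|H| + 1` points of `J₀`.
Double counting incidences gives `2 |J₀| ≤ m (|H| + 1) ≤ 2 C m |J₀|^(1/3)`, i.e.
`|J₀|^(2/3) ≤ C m`.
-/

open Finset

theorem Finset.card_le_card_add_one_of_separated_by_upperSets {α ι : Type*} [LinearOrder α]
    (S : Finset α) (H : Finset ι) (U : ι → Set α) (hU : ∀ i, IsUpperSet (U i))
    (hsep : ∀ s ∈ S, ∀ t ∈ S, s < t → ∃ i ∈ H, s ∉ U i ∧ t ∈ U i) :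
    #S ≤ #H + 1 := by
  classical
  let above (t : α) : Finset ι := {i ∈ H | t ∈ U i}
  have hmono : StrictMonoOn (fun t => #(above t)) S := by
    intro s hs t ht hst
    obtain ⟨i, hi, hsi, hti⟩ := hsep s hs t ht hst
    refine card_lt_card ((ssubset_iff_of_subset ?_).2 ⟨i, ?_, ?_⟩)
    · intro j hj
      simp only [above, mem_filter] at hj ⊢
      exact ⟨hj.1, hU j hst.le hj.2⟩
    · exact mem_filter.2 ⟨hi, hti⟩
    · exact fun h => hsi (mem_filter.1 h).2
  calc #S ≤ #(range (#H + 1)) :=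
        card_le_card_of_injOn _ (fun t _ => mem_range.2 (Nat.lt_succ_of_le (card_filter_le _ _)))
          hmono.injOn
    _ = #H + 1 := card_range _

theorem Finset.card_le_card_add_one_of_separated_by_affine {ι : Type*} (S : Finset ℝ)
    (H : Finset ι) (a b : ι → ℝ)
    (hsep : ∀ s ∈ S, ∀ t ∈ S, s ≠ t →
      ∃ i ∈ H, (a i + s * b i) * (a i + t * b i) < 0) :
    #S ≤ #H + 1 := by
  refine S.card_le_card_add_one_of_separated_by_upperSets H
    (fun i => {t | 0 < (a i + t * b i) * b i}) (fun i s t hst hs => ?_) (fun s hs t ht hst => ?_)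
  · simp only [Set.mem_ofPred_eq] at hs ⊢
    nlinarith [mul_nonneg (sub_nonneg.2 hst) (sq_nonneg (b i))]
  · obtain ⟨i, hi, hneg⟩ := hsep s hs t ht hst.ne
    have hgrow : (a i + s * b i) * b i ≤ (a i + t * b i) * b i := by
      nlinarith [mul_nonneg (sub_nonneg.2 hst.le) (sq_nonneg (b i))]
    have hb : b i ≠ 0 := by
      rintro hb
      simp only [hb, mul_zero, add_zero] at hneg
      exact (mul_self_nonneg _).not_gt hneg
    have hopp : (a i + s * b i) * b i * ((a i + t * b i) * b i) < 0 := by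
      nlinarith [mul_neg_of_neg_of_pos hneg (sq_pos_of_ne_zero hb)]
    refine ⟨i, hi, fun hs' : 0 < (a i + s * b i) * b i => ?_, ?_⟩
    · exact (mul_pos hs' (hs'.trans_le hgrow)).not_gt hopp
    · show 0 < (a i + t * b i) * b i
      by_contra! ht'
      exact (mul_nonneg_of_nonpos_of_nonpos (hgrow.trans ht') ht').not_gt hopp

theorem pval_add_smul (h : (Fin 3 → ℝ) × ℝ) (p v : Fin 3 → ℝ) (t : ℝ) :
    pval h (p + t • v) = pval h p + t * h.1 ⬝ᵥ v := by
  simp only [pval, ← dotProduct.eq_1, dotProduct_add, dotProduct_smul, smul_eq_mul]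
  ring

theorem card_filter_mem_line_le (H : Finset ((Fin 3 → ℝ) × ℝ)) (J : Finset (Fin 3 → ℝ))
    {l : Set (Fin 3 → ℝ)} [DecidablePred (· ∈ l)] (hl : IsLine l)
    (hsep : ∀ x ∈ J, ∀ y ∈ J, x ≠ y → ∃ h ∈ H, pval h x * pval h y < 0) :
    #{x ∈ J | x ∈ l} ≤ #H + 1 := by
  classical
  obtain ⟨p, v, hv, rfl⟩ := hl
  have hinj : Function.Injective fun t : ℝ => p + t • v :=
    fun s t hst => smul_left_injective ℝ hv (add_left_cancel hst)
  have hrange : {x ∈ J | x ∈ {x | ∃ t : ℝ, x = p + t • v}} =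
      {x ∈ J | x ∈ Set.range fun t : ℝ => p + t • v} := by
    simp only [Set.mem_range, Set.mem_ofPred_eq, eq_comm]
  rw [hrange, ← card_preimage J _ hinj.injOn]
  refine card_le_card_add_one_of_separated_by_affine _ H (fun h => pval h p) (fun h => h.1 ⬝ᵥ v)
    fun s hs t ht hst => ?_
  rw [mem_preimage] at hs ht
  simpa only [pval_add_smul] using hsep _ hs _ ht (hinj.ne hst)

theorem le_rpow_three_halves_of_le_mul_rpow_one_third {N a : ℝ} (hN : 0 ≤ N) (ha : 0 ≤ a)
    (h : N ≤ a * N ^ ((1 : ℝ) / 3)) : N ≤ a ^ ((3 : ℝ) / 2) := by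
  rcases hN.eq_or_lt with rfl | hN
  · positivity
  have hcube : N ^ ((2 : ℝ) / 3) * N ^ ((1 : ℝ) / 3) = N := by
    rw [← Real.rpow_add hN]; norm_num
  have h23 : N ^ ((2 : ℝ) / 3) ≤ a := by
    rw [← mul_le_mul_iff_of_pos_right (Real.rpow_pos_of_pos hN ((1 : ℝ) / 3)), hcube]
    exact h
  calc N = (N ^ ((2 : ℝ) / 3)) ^ ((3 : ℝ) / 2) := by rw [← Real.rpow_mul hN.le]; norm_num
    _ ≤ a ^ ((3 : ℝ) / 2) := by gcongr

theorem le_rpow_three_halves_of_two_mul_le {C : ℝ} {n m k : ℕ} (hC : 1 ≤ C)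
    (hk : (k : ℝ) ≤ C * (n : ℝ) ^ ((1 : ℝ) / 3)) (h : n * 2 ≤ m * (k + 1)) :
    (n : ℝ) ≤ C ^ ((3 : ℝ) / 2) * (m : ℝ) ^ ((3 : ℝ) / 2) := by
  rcases Nat.eq_zero_or_pos n with rfl | hn
  · simp only [CharP.cast_eq_zero]; positivity
  have hroot : 1 ≤ (n : ℝ) ^ ((1 : ℝ) / 3) :=
    Real.one_le_rpow (by exact_mod_cast hn) (by norm_num)
  have h' : (n : ℝ) * 2 ≤ m * (k + 1) := by exact_mod_cast h
  rw [← Real.mul_rpow (by linarith) m.cast_nonneg]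
  refine le_rpow_three_halves_of_le_mul_rpow_one_third n.cast_nonneg (by positivity) ?_
  have hk1 : (k : ℝ) + 1 ≤ 2 * (C * (n : ℝ) ^ ((1 : ℝ) / 3)) := by nlinarith
  nlinarith [mul_le_mul_of_nonneg_left hk1 m.cast_nonneg]

/-- **Sharir's joints bound for proper 3-dimensional sets.** Let `L` be a set of `m`
distinct lines in `ℝ³` and let `J₀` be a finite set of points, each lying on at least two
lines of `L`. If `J₀` is proper 3-dimensional up to a constant factor `C ≥ 1`, then
`|J₀| ≤ C^(3/2) * m^(3/2)`. -/
theorem joints_proper_3d (C : ℝ) (hC : 1 ≤ C)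
    (L : Finset (Set (Fin 3 → ℝ))) (m : ℕ) (hm : L.card = m)
    (hL : ∀ l ∈ L, IsLine l)
    (J₀ : Finset (Fin 3 → ℝ))
    (hJ : ∀ p ∈ J₀, 2 ≤ Set.ncard {l : Set (Fin 3 → ℝ) | l ∈ L ∧ p ∈ l})
    (hproper : Proper3D C (J₀ : Set (Fin 3 → ℝ))) :
    (J₀.card : ℝ) ≤ C ^ ((3 : ℝ) / 2) * (m : ℝ) ^ ((3 : ℝ) / 2) := by
  classical
  obtain ⟨H, -, hHcard, -, hsep⟩ := hproper
  rw [Set.ncard_coe_finset] at hHcard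
  have hdouble : #J₀ * 2 ≤ #L * (#H + 1) :=
    card_mul_le_card_mul (fun x l => x ∈ l)
      (fun x hx => by
        simpa only [bipartiteAbove, ← coe_filter, Set.ncard_coe_finset] using hJ x hx)
      (fun l hl => card_filter_mem_line_le H J₀ (hL l hl) hsep)
  exact le_rpow_three_halves_of_two_mul_le hC hHcard (hm ▸ hdouble)
end

section
/- There is an absolute constant c > 0 such that for every integer n ≥ 2 and every integer k with 2 ≤ k ≤ n, the number of k-rich lines with respect to the cube lattice P = {1, 2, …, n}³ ⊂ ℝ³ is at least c·n⁶/k⁴ (that is, at least c·N²/k⁴ where N = n³ = |P|). -/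
/-- The cube lattice `{1, 2, …, n}^d ⊂ ℝ^d`. -/
def cubeLattice (d n : ℕ) : Set (Fin d → ℝ) :=
  {x | ∀ i, ∃ m : ℕ, 1 ≤ m ∧ m ≤ n ∧ x i = m}

open Finset

section Lines

variable {d : ℕ}

def lineThrough (p v : Fin d → ℝ) : Set (Fin d → ℝ) := {x | ∃ t : ℝ, x = p + t • v}

def richLines (d n k : ℕ) : Set (Set (Fin d → ℝ)) :=
  {l | IsLine l ∧ k ≤ (cubeLattice d n ∩ l).ncard}

theorem cubeLattice_finite (d n : ℕ) : (cubeLattice d n).Finite := by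
  refine (Set.Finite.pi fun _ => (Set.finite_Icc 1 n).image (Nat.cast : ℕ → ℝ)).subset ?_
  intro x hx i _
  obtain ⟨m, h1, h2, h3⟩ := hx i
  exact ⟨m, ⟨h1, h2⟩, h3.symm⟩

theorem IsLine.eq_lineThrough {l : Set (Fin d → ℝ)} (hl : IsLine l) {p q : Fin d → ℝ}
    (hp : p ∈ l) (hq : q ∈ l) (hpq : p ≠ q) : l = lineThrough p (q - p) := by
  obtain ⟨a, v, -, rfl⟩ := hl
  obtain ⟨s, rfl⟩ := hp
  obtain ⟨t, rfl⟩ := hq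
  have hst : t - s ≠ 0 := sub_ne_zero.mpr fun h => hpq (by rw [h])
  ext x
  constructor
  · rintro ⟨u, rfl⟩
    refine ⟨(u - s) / (t - s), ?_⟩
    rw [show a + t • v - (a + s • v) = (t - s) • v by module, smul_smul, div_mul_cancel₀ _ hst]
    module
  · rintro ⟨u, rfl⟩
    exact ⟨s + u * (t - s), by module⟩

theorem richLines_finite (n : ℕ) {k : ℕ} (hk : 2 ≤ k) : (richLines d n k).Finite := by
  have hP := cubeLattice_finite d n
  refine ((hP.prod hP).image fun pq => lineThrough pq.1 (pq.2 - pq.1)).subset ?_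
  rintro l ⟨hl, hk'⟩
  obtain ⟨p, hp, q, hq, hpq⟩ :=
    (Set.one_lt_ncard (hP.inter_of_left l)).mp (by omega)
  exact ⟨(p, q), ⟨hp.1, hq.1⟩, (hl.eq_lineThrough hp.2 hq.2 hpq).symm⟩

theorem exists_of_lineThrough_eq {p v p' v' : Fin d → ℝ}
    (h : lineThrough p v = lineThrough p' v') :
    (∃ t : ℝ, p' = p + t • v) ∧ ∃ r : ℝ, v' = r • v := by
  obtain ⟨t, ht⟩ : p' ∈ lineThrough p v := h ▸ ⟨0, by simp⟩
  obtain ⟨s, hs⟩ : p' + v' ∈ lineThrough p v := h ▸ ⟨1, by simp⟩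
  refine ⟨⟨t, ht⟩, s - t, ?_⟩
  linear_combination (norm := module) hs - ht

end Lines

section LatticeLines

variable {d : ℕ}

def latticeLine (p v : Fin d → ℕ) : Set (Fin d → ℝ) :=
  lineThrough (fun i => (p i : ℝ)) (fun i => (v i : ℝ))

theorem latticeLine_mem_richLines {n k : ℕ} {p v : Fin d → ℕ} (hv : v ≠ 0)
    (hp : ∀ i, 1 ≤ p i) (hpv : ∀ i, p i + (k - 1) * v i ≤ n) :
    latticeLine p v ∈ richLines d n k := by
  refine ⟨⟨_, _, fun h => hv (funext fun i => by simpa using congrFun h i), rfl⟩, ?_⟩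
  let f : ℕ → Fin d → ℝ := fun j i => ((p i + j * v i : ℕ) : ℝ)
  have hf : Set.InjOn f (range k) := by
    intro j _ j' _ h
    obtain ⟨i, hi⟩ := Function.ne_iff.mp hv
    have := congrFun h i
    simp only [f, Nat.cast_inj] at this
    exact Nat.eq_of_mul_eq_mul_right (Nat.pos_of_ne_zero hi) (by omega)
  have hmaps : ∀ j ∈ (range k : Set ℕ), f j ∈ cubeLattice d n ∩ latticeLine p v := by
    intro j hj
    have hj : j ≤ k - 1 := by simp only [coe_range, Set.mem_Iio] at hj; omega
    refine ⟨fun i => ⟨_, ?_, ?_, rfl⟩, j, funext fun i => by simp [f]⟩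
    · exact (hp i).trans (Nat.le_add_right _ _)
    · exact (Nat.add_le_add_left (Nat.mul_le_mul_right _ hj) _).trans (hpv i)
  calc k = (range k : Set ℕ).ncard := by simp
    _ ≤ _ := Set.ncard_le_ncard_of_injOn f hmaps hf ((cubeLattice_finite d n).inter_of_left _)

theorem exists_int_eq_of_coprime {a b : ℕ} (hab : a.Coprime b) {t : ℝ} {x y : ℤ}
    (hx : t * a = x) (hy : t * b = y) : ∃ z : ℤ, t = z := by
  obtain ⟨u, w, huw⟩ := Nat.isCoprime_iff_coprime.mpr hab
  have huw : (u : ℝ) * a + w * b = 1 := by exact_mod_cast huw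
  refine ⟨u * x + w * y, ?_⟩
  push_cast
  linear_combination -t * huw + u * hx + w * hy

/-- Proportional directions with coprime `i, j` entries are equal, so `v = v'`; then
`p' - p = t • v` forces `t ∈ ℤ`, and `|p' i - p i| < v i` forces `t = 0`. -/
theorem eq_of_latticeLine_eq {p v p' v' : Fin d → ℕ} {i j : Fin d}
    (hv : (v i).Coprime (v j)) (hv' : (v' i).Coprime (v' j))
    (hp : 1 ≤ p i) (hpv : p i ≤ v i) (hp' : 1 ≤ p' i) (hpv' : p' i ≤ v' i)
    (h : latticeLine p v = latticeLine p' v') : p = p' ∧ v = v' := by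
  obtain ⟨⟨t, ht⟩, r, hr⟩ := exists_of_lineThrough_eq h
  have hr' : ∀ l, (v' l : ℝ) = r * v l := fun l => congrFun hr l
  have ht' : ∀ l, (p' l : ℝ) = p l + t * v l := fun l => congrFun ht l
  have hcross : v i * v' j = v' i * v j := by
    have : (v i : ℝ) * v' j = v' i * v j := by rw [hr', hr']; ring
    exact_mod_cast this
  have hvi : v i = v' i := Nat.dvd_antisymm
    (hv.dvd_of_dvd_mul_right ⟨_, hcross.symm⟩) (hv'.dvd_of_dvd_mul_right ⟨_, hcross⟩)
  have hvi0 : (v i : ℝ) ≠ 0 := Nat.cast_ne_zero.mpr (by omega)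
  have hr1 : r = 1 := by
    have := hr' i
    rw [← hvi] at this
    exact (mul_eq_right₀ hvi0).mp this.symm
  have hvv : v = v' := funext fun l => by
    exact_mod_cast (by rw [hr', hr1, one_mul] : (v l : ℝ) = v' l)
  obtain ⟨z, rfl⟩ := exists_int_eq_of_coprime hv (t := t) (x := p' i - p i) (y := p' j - p j)
    (by push_cast; linarith [ht' i]) (by push_cast; linarith [ht' j])
  have hpz : (p' i : ℤ) - p i = v i * z := by
    have : ((p' i - p i : ℤ) : ℝ) = ((v i * z : ℤ) : ℝ) := by push_cast; linarith [ht' i]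
    exact_mod_cast this
  have hz : z = 0 := by
    have h0 : (p' i : ℤ) - p i = 0 := Int.eq_zero_of_abs_lt_dvd ⟨z, hpz⟩ (by rw [abs_lt]; omega)
    rw [h0, eq_comm, mul_eq_zero] at hpz
    exact hpz.resolve_left (by omega)
  refine ⟨funext fun l => ?_, hvv⟩
  have := ht' l
  rw [hz, Int.cast_zero, zero_mul, add_zero] at this
  exact_mod_cast this.symm

theorem card_le_ncard_richLines {n k : ℕ} {ι : Type*} (hk : 2 ≤ k) (S : Finset ι)
    (p v : ι → Fin d → ℕ) (i j : Fin d) (hinj : Set.InjOn (fun a => (p a, v a)) S)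
    (hcop : ∀ a ∈ S, (v a i).Coprime (v a j)) (hpv : ∀ a ∈ S, p a i ≤ v a i)
    (hp : ∀ a ∈ S, ∀ l, 1 ≤ p a l) (hfit : ∀ a ∈ S, ∀ l, p a l + (k - 1) * v a l ≤ n) :
    #S ≤ (richLines d n k).ncard := by
  rw [← Set.ncard_coe_finset]
  refine Set.ncard_le_ncard_of_injOn (fun a => latticeLine (p a) (v a))
    (fun a ha => latticeLine_mem_richLines ?_ (hp a ha) (hfit a ha))
    (fun a ha b hb hab => hinj ha hb ?_) (richLines_finite n hk)
  · intro h0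
    have := (hp a ha i).trans (hpv a ha)
    simp [h0] at this
  · obtain ⟨h1, h2⟩ := eq_of_latticeLine_eq (hcop a ha) (hcop b hb) (hp a ha i) (hpv a ha)
      (hp b hb i) (hpv b hb) hab
    simp only [h1, h2]

end LatticeLines

/-- Telescoping, using `1 / d ^ 2 ≤ 1 / (d - 1/2) - 1 / (d + 1/2)`. -/
theorem sum_Icc_inv_sq_le {m : ℕ} (hm : 1 ≤ m) :
    ∑ d ∈ Icc 2 m, ((d : ℝ) ^ 2)⁻¹ ≤ 2 / 3 - 2 / (2 * m + 1) := by
  induction m, hm using Nat.le_induction with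
  | base => norm_num
  | succ m hm ih =>
    rw [sum_Icc_succ_top (by omega)]
    have hstep : (((m + 1 : ℕ) : ℝ) ^ 2)⁻¹ ≤
        2 / (2 * m + 1) - 2 / (2 * ((m + 1 : ℕ) : ℝ) + 1) := by
      push_cast
      rw [div_sub_div _ _ (by positivity) (by positivity), ← one_div,
        div_le_div_iff₀ (by positivity) (by positivity)]
      nlinarith
    linarith

theorem card_not_coprime_Icc_le (m : ℕ) :
    (#{q ∈ Icc 1 m ×ˢ Icc 1 m | ¬ q.1.Coprime q.2} : ℝ) ≤ 2 / 3 * m ^ 2 := by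
  have hsub : {q ∈ Icc 1 m ×ˢ Icc 1 m | ¬ q.1.Coprime q.2} ⊆
      (Icc 2 m).biUnion fun d => {a ∈ Icc 1 m | d ∣ a} ×ˢ {b ∈ Icc 1 m | d ∣ b} := by
    rintro ⟨a, b⟩ hab
    simp only [mem_filter, mem_product, mem_Icc] at hab
    obtain ⟨⟨⟨ha1, ha⟩, hb1, hb⟩, hcop⟩ := hab
    have hg : Nat.gcd a b ≤ a := Nat.le_of_dvd (by omega) (Nat.gcd_dvd_left a b)
    have hg2 : 2 ≤ Nat.gcd a b := by
      have := Nat.gcd_pos_of_pos_left b (by omega : 0 < a)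
      unfold Nat.Coprime at hcop
      omega
    simp only [mem_biUnion, mem_product, mem_filter, mem_Icc]
    exact ⟨_, ⟨hg2, by omega⟩, ⟨⟨ha1, ha⟩, Nat.gcd_dvd_left a b⟩, ⟨hb1, hb⟩, Nat.gcd_dvd_right a b⟩
  have hcard : ∀ d, #{a ∈ Icc 1 m | d ∣ a} = m / d := fun d => Nat.Ioc_filter_dvd_card_eq_div m d
  have hsum : ∑ d ∈ Icc 2 m, ((d : ℝ) ^ 2)⁻¹ ≤ 2 / 3 := by
    rcases Nat.eq_zero_or_pos m with rfl | hm
    · norm_num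
    · linarith [sum_Icc_inv_sq_le hm, (by positivity : (0 : ℝ) ≤ 2 / (2 * m + 1))]
  calc (#{q ∈ Icc 1 m ×ˢ Icc 1 m | ¬ q.1.Coprime q.2} : ℝ)
      ≤ ∑ d ∈ Icc 2 m, (((m / d : ℕ) : ℝ)) ^ 2 := by
        have := (card_le_card hsub).trans card_biUnion_le
        simp only [card_product, hcard] at this
        exact_mod_cast (by simpa [sq] using this)
    _ ≤ ∑ d ∈ Icc 2 m, (m : ℝ) ^ 2 * ((d : ℝ) ^ 2)⁻¹ := by
        gcongr with d
        rw [← div_eq_mul_inv, ← div_pow]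
        gcongr
        exact Nat.cast_div_le
    _ ≤ 2 / 3 * m ^ 2 := by
        rw [← mul_sum]
        nlinarith [sq_nonneg (m : ℝ)]

theorem le_card_coprime_Icc {s : ℕ} (m : ℕ) (hs : 1 ≤ s) :
    ((m + 1 - s) * m : ℝ) - 2 / 3 * m ^ 2 ≤ #{q ∈ Icc s m ×ˢ Icc 1 m | q.1.Coprime q.2} := by
  have hsplit := card_filter_add_card_filter_not (s := Icc s m ×ˢ Icc 1 m)
    fun q : ℕ × ℕ => q.1.Coprime q.2
  have hbad : #{q ∈ Icc s m ×ˢ Icc 1 m | ¬ q.1.Coprime q.2} ≤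
      #{q ∈ Icc 1 m ×ˢ Icc 1 m | ¬ q.1.Coprime q.2} :=
    card_le_card (filter_subset_filter _ (product_subset_product_left (Icc_subset_Icc_left hs)))
  rw [card_product, Nat.card_Icc, Nat.card_Icc, Nat.add_sub_cancel] at hsplit
  have hsm : (m : ℝ) + 1 ≤ ((m + 1 - s : ℕ) : ℝ) + s := by
    exact_mod_cast (by omega : m + 1 ≤ m + 1 - s + s)
  have hsplit' : (#{q ∈ Icc s m ×ˢ Icc 1 m | q.1.Coprime q.2} : ℝ) +
      #{q ∈ Icc s m ×ˢ Icc 1 m | ¬ q.1.Coprime q.2} = ((m + 1 - s : ℕ) : ℝ) * m := by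
    exact_mod_cast hsplit
  have hbad' : (#{q ∈ Icc s m ×ˢ Icc 1 m | ¬ q.1.Coprime q.2} : ℝ) ≤ 2 / 3 * m ^ 2 :=
    (Nat.cast_le.mpr hbad).trans (card_not_coprime_Icc_le m)
  nlinarith [(by positivity : (0 : ℝ) ≤ m)]

theorem card_coprime_mul_le_ncard_richLines {n k s m h : ℕ} (hk : 2 ≤ k)
    (hkmh : k * m + h ≤ n) :
    #{q ∈ Icc s m ×ˢ Icc 1 m | q.1.Coprime q.2} * m * s * h ^ 2 ≤ (richLines 3 n k).ncard := by
  let S := {q ∈ Icc s m ×ˢ Icc 1 m | q.1.Coprime q.2} ×ˢ Icc 1 m ×ˢ Icc 1 s ×ˢ Icc 1 h ×ˢ Icc 1 h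
  have hS : #S = #{q ∈ Icc s m ×ˢ Icc 1 m | q.1.Coprime q.2} * m * s * h ^ 2 := by
    simp only [S, card_product, Nat.card_Icc, Nat.add_sub_cancel]
    ring
  have hmem : ∀ a ∈ S, (s ≤ a.1.1 ∧ a.1.1 ≤ m) ∧ (1 ≤ a.1.2 ∧ a.1.2 ≤ m) ∧ a.1.1.Coprime a.1.2 ∧
      (1 ≤ a.2.1 ∧ a.2.1 ≤ m) ∧ (1 ≤ a.2.2.1 ∧ a.2.2.1 ≤ s) ∧ (1 ≤ a.2.2.2.1 ∧ a.2.2.2.1 ≤ h) ∧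
      (1 ≤ a.2.2.2.2 ∧ a.2.2.2.2 ≤ h) := by
    intro a ha
    simp only [S, mem_product, mem_filter, mem_Icc] at ha
    tauto
  rw [← hS]
  refine card_le_ncard_richLines hk S (fun a => ![a.2.2.1, a.2.2.2.1, a.2.2.2.2])
    (fun a => ![a.1.1, a.1.2, a.2.1]) 0 1 ?_ (fun a ha => (hmem a ha).2.2.1) ?_ ?_ ?_
  · rintro ⟨⟨a, b⟩, c, x, y, z⟩ - ⟨⟨a', b'⟩, c', x', y', z'⟩ - heq
    simp_all [Matrix.vecCons_inj]
  · intro a ha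
    have := hmem a ha
    simp only [Matrix.cons_val_zero]
    omega
  · intro a ha l
    have := hmem a ha
    fin_cases l <;>
      simp only [Fin.zero_eta, Fin.mk_one, Fin.reduceFinMk, Fin.isValue, Matrix.cons_val_zero,
      Matrix.cons_val_one, Matrix.cons_val] <;> omega
  · intro a ha l
    have ha := hmem a ha
    have hk1 : ∀ c ≤ m, (k - 1) * c + c ≤ k * m := fun c hc => by
      rw [← Nat.succ_mul, Nat.succ_eq_add_one, Nat.sub_add_cancel (by omega)]
      exact Nat.mul_le_mul_left k hc
    have := hk1 _ ha.1.2
    have := hk1 _ ha.2.1.2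
    have := hk1 _ ha.2.2.2.1.2
    fin_cases l <;>
      simp only [Fin.zero_eta, Fin.mk_one, Fin.reduceFinMk, Fin.isValue, Matrix.cons_val_zero,
      Matrix.cons_val_one, Matrix.cons_val] <;> omega

theorem sq_le_ncard_richLines {n k : ℕ} (hk : 2 ≤ k) (hkn : k ≤ n) :
    n ^ 2 ≤ (richLines 3 n k).ncard := by
  rw [show n ^ 2 = #(Icc 1 n ×ˢ Icc 1 n) by simp [sq]]
  refine card_le_ncard_richLines hk _ (fun a => ![1, a.1, a.2]) (fun _ => ![1, 0, 0])
    0 1 ?_ (fun _ _ => by simp) (fun _ _ => by simp) ?_ ?_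
  · rintro ⟨y, z⟩ - ⟨y', z'⟩ - heq
    simp_all [Matrix.vecCons_inj]
  · intro a ha l
    simp only [mem_product, mem_Icc] at ha
    fin_cases l <;>
      simp only [Fin.zero_eta, Fin.mk_one, Fin.reduceFinMk, Fin.isValue, Matrix.cons_val_zero,
      Matrix.cons_val_one, Matrix.cons_val] <;> omega
  · intro a ha l
    simp only [mem_product, mem_Icc] at ha
    fin_cases l <;>
      simp only [Fin.zero_eta, Fin.mk_one, Fin.reduceFinMk, Fin.isValue, Matrix.cons_val_zero,
      Matrix.cons_val_one, Matrix.cons_val] <;> omega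

theorem pow_six_le_ncard_richLines {n k : ℕ} (hk : 2 ≤ k) (hkn : k ≤ n) :
    n ^ 6 ≤ 147456 * k ^ 4 * (richLines 3 n k).ncard := by
  rcases lt_or_ge n (2 * k) with h2k | h2k
  · calc n ^ 6 = n ^ 4 * n ^ 2 := by ring
      _ ≤ (2 * k) ^ 4 * (richLines 3 n k).ncard := by
        exact Nat.mul_le_mul (Nat.pow_le_pow_left h2k.le 4) (sq_le_ncard_richLines hk hkn)
      _ ≤ _ := by nlinarith [Nat.zero_le (k ^ 4 * (richLines 3 n k).ncard)]
  set m := n / (2 * k) with hm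
  set s := m / 6 + 1
  set h := n / 2
  set G := #{q ∈ Icc s m ×ˢ Icc 1 m | q.1.Coprime q.2}
  have hm1 : 1 ≤ m := (Nat.one_le_div_iff (by omega)).mpr h2k
  have hG : m ^ 2 ≤ 6 * G := by
    have h6 : (6 : ℝ) * s ≤ m + 6 := by exact_mod_cast (by omega : 6 * s ≤ m + 6)
    have := le_card_coprime_Icc m (by omega : 1 ≤ s)
    have : (m : ℝ) ^ 2 ≤ 6 * G := by nlinarith [(by positivity : (0 : ℝ) ≤ m)]
    exact_mod_cast this
  have h2km : 2 * (k * m) ≤ n := by rw [← mul_assoc]; exact Nat.mul_div_le n (2 * k)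
  have hn : n ≤ 4 * k * m := by
    have := Nat.lt_div_mul_add (a := n) (b := 2 * k) (by omega)
    rw [← hm] at this
    nlinarith
  have hlines :=
    card_coprime_mul_le_ncard_richLines hk (n := n) (s := s) (m := m) (h := h) (by omega)
  calc n ^ 6 = n ^ 4 * n ^ 2 := by ring
    _ ≤ (4 * k * m) ^ 4 * (4 * h) ^ 2 := by gcongr; omega
    _ = 4096 * k ^ 4 * (m ^ 2 * m * m * h ^ 2) := by ring
    _ ≤ 4096 * k ^ 4 * (6 * G * m * (6 * s) * h ^ 2) := by gcongr; omega
    _ = 147456 * k ^ 4 * (G * m * s * h ^ 2) := by ring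
    _ ≤ 147456 * k ^ 4 * (richLines 3 n k).ncard := by gcongr

/-- There is an absolute constant `c > 0` such that for every `n ≥ 2` and `2 ≤ k ≤ n`,
the number of `k`-rich lines with respect to the cube lattice `{1, …, n}³ ⊂ ℝ³` is at
least `c * n⁶ / k⁴`. -/
theorem cube_lattice_rich_lines_lower_bound :
    ∃ c : ℝ, 0 < c ∧
      ∀ n k : ℕ, 2 ≤ n → 2 ≤ k → k ≤ n →
        c * (n : ℝ) ^ 6 / (k : ℝ) ^ 4 ≤
          ((Set.ncard {l : Set (Fin 3 → ℝ) |
              IsLine l ∧ k ≤ Set.ncard (cubeLattice 3 n ∩ l)}) : ℝ) := by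
  refine ⟨1 / 147456, by norm_num, fun n k _ hk hkn => ?_⟩
  have key : (n : ℝ) ^ 6 ≤ 147456 * k ^ 4 * (richLines 3 n k).ncard := by
    exact_mod_cast pow_six_le_ncard_richLines hk hkn
  rw [div_le_iff₀ (by positivity)]
  change _ ≤ ((richLines 3 n k).ncard : ℝ) * _
  linarith
end
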